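/- Let A be an abelian category with a torsion pair (T, F), and let B = Σ(F) * T be the HRS-tilt inside D^b(A), i.e. B = {X ∈ D^b(A) : H^{-1}(X) ∈ F, H^0(X) ∈ T, H^i(X) = 0 for i ≠ -1, 0}. Then (Σ(F), T) is a torsion pair in the abelian category B. -/

import Mathlib

/-!
Morphisms `(ι f)⟦1⟧ ⟶ ι t` vanish because they go from `D^{≤ -1}` to `D^{≥ 0}` for the
t-structure of `D^b(A)`. For `X ∈ B`, the defining triangle `(ι f)⟦1⟧ ⟶ X ⟶ ι t ⟶` has
its outer vertices in `B` as well (complete each by a zero object of `T`, resp. `F`), and a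
distinguished triangle with all vertices in the heart `B` is a short exact sequence of `B`.
-/

open CategoryTheory Category Limits Pretriangulated Triangulated ZeroObject

namespace HRS

variable (A : Type*) [Category A] [Abelian A]

/-- A short exact sequence `0 ⟶ Y ⟶ E ⟶ X ⟶ 0` in `A`, i.e. an extension of `X` by `Y`. -/
structure SES (X Y : A) where
  E : A
  i : Y ⟶ E
  p : E ⟶ X
  w : i ≫ p = 0
  ex : (ShortComplex.mk i p w).ShortExact

/-- A torsion pair `(T, F)` in the abelian category `A`. -/
structure TorsionPair (T F : A → Prop) : Prop where
  hom_zero : ∀ ⦃t f : A⦄, T t → F f → ∀ (g : t ⟶ f), g = 0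
  exists_ses : ∀ X : A, ∃ (t f : A) (i : t ⟶ X) (p : X ⟶ f) (w : i ≫ p = 0),
    T t ∧ F f ∧ (ShortComplex.mk i p w).ShortExact

/-- `n`-fold Yoneda extensions of `X` by `Y`, presented as iterated splices of
short exact sequences. -/
inductive ExtSeq : ℕ → A → A → Type _
  | base {X Y : A} (s : SES A X Y) : ExtSeq 1 X Y
  | splice {n : ℕ} {X Y Z : A} (s : SES A Z Y) (ξ : ExtSeq n X Z) : ExtSeq (n + 1) X Y

/-- Morphisms of Yoneda extensions over a pair of morphisms on the two end terms. -/
inductive ExtHom : ∀ {n : ℕ} {X X' Y Y' : A}, (Y ⟶ Y') → (X ⟶ X') →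
    ExtSeq A n X Y → ExtSeq A n X' Y' → Prop
  | base {X X' Y Y' : A} {a : Y ⟶ Y'} {b : X ⟶ X'} (s : SES A X Y) (s' : SES A X' Y')
      (e : s.E ⟶ s'.E) (h1 : s.i ≫ e = a ≫ s'.i) (h2 : s.p ≫ b = e ≫ s'.p) :
      ExtHom a b (.base s) (.base s')
  | splice {n : ℕ} {X X' Y Y' Z Z' : A} {a : Y ⟶ Y'} {b : X ⟶ X'} (t : Z ⟶ Z')
      (s : SES A Z Y) (s' : SES A Z' Y') (ξ : ExtSeq A n X Z) (ξ' : ExtSeq A n X' Z')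
      (e : s.E ⟶ s'.E) (h1 : s.i ≫ e = a ≫ s'.i) (h2 : s.p ≫ t = e ≫ s'.p)
      (h : ExtHom t b ξ ξ') :
      ExtHom a b (.splice s ξ) (.splice s' ξ')

/-- The Yoneda equivalence relation on `n`-fold extensions of `X` by `Y`: the equivalence
relation generated by the existence of a morphism of extensions which is the identity
on both end terms. -/
def ExtEquiv {n : ℕ} {X Y : A} (ξ ξ' : ExtSeq A n X Y) : Prop :=
  Relation.EqvGen (fun ζ ζ' => ExtHom A (𝟙 Y) (𝟙 X) ζ ζ') ξ ξ'

/-- The `n`-th Yoneda extension group (as a set) `Yext^n_A(X, Y)`. -/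
def Yext (n : ℕ) (X Y : A) : Type _ :=
  Quot (fun ξ ξ' : ExtSeq A n X Y => ExtHom A (𝟙 Y) (𝟙 X) ξ ξ')

/-- The class of an extension in `Yext`. -/
def Yext.mk {n : ℕ} {X Y : A} (ξ : ExtSeq A n X Y) : Yext A n X Y := Quot.mk _ ξ

/-- The short exact sequence `0 ⟶ Y ⟶ Y ⟶ 0 ⟶ 0`. -/
noncomputable def sesToZero (Y : A) : SES A (0 : A) Y where
  E := Y
  i := 𝟙 Y
  p := 0
  w := by simp
  ex := (ShortComplex.Splitting.shortExact
    { r := 𝟙 Y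
      s := 0
      f_r := by simp
      s_g := by apply Subsingleton.elim
      id := by simp })

/-- The short exact sequence `0 ⟶ 0 ⟶ 0 ⟶ 0 ⟶ 0`. -/
noncomputable def sesZero : SES A (0 : A) (0 : A) where
  E := 0
  i := 0
  p := 0
  w := by simp
  ex := (ShortComplex.Splitting.shortExact
    { r := 0
      s := 0
      f_r := by apply Subsingleton.elim
      s_g := by apply Subsingleton.elim
      id := by apply Subsingleton.elim })

/-- The short exact sequence `0 ⟶ 0 ⟶ X ⟶ X ⟶ 0`. -/
noncomputable def sesFromZero (X : A) : SES A X (0 : A) where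
  E := X
  i := 0
  p := 𝟙 X
  w := by simp
  ex := (ShortComplex.Splitting.shortExact
    { r := 0
      s := 𝟙 X
      f_r := by apply Subsingleton.elim
      s_g := by simp
      id := by simp })

/-- The trivial 3-fold extension `0 → Y → Y → 0 → X → X → 0`, representing the zero
class in `Yext^3_A(X, Y)`. -/
noncomputable def trivialExt3 (X Y : A) : ExtSeq A 3 X Y :=
  ExtSeq.splice (sesToZero A Y) (ExtSeq.splice (sesZero A) (ExtSeq.base (sesFromZero A X)))

/-- `Sub P`: subobjects of objects satisfying `P`. -/
def SubP (P : A → Prop) (X : A) : Prop := ∃ (U : A) (m : X ⟶ U), P U ∧ Mono m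

/-- `Fac P`: quotient objects of objects satisfying `P`. -/
def FacP (P : A → Prop) (X : A) : Prop := ∃ (U : A) (p : U ⟶ X), P U ∧ Epi p

/-- `P * Q`: objects that are extensions of an object satisfying `Q` by one satisfying `P`. -/
def StarP (P Q : A → Prop) (X : A) : Prop :=
  ∃ (u v : A) (i : u ⟶ X) (p : X ⟶ v) (w : i ≫ p = 0),
    P u ∧ Q v ∧ (ShortComplex.mk i p w).ShortExact

variable (D : Type*) [Category D] [HasZeroObject D] [Preadditive D] [HasShift D ℤ]
  [∀ n : ℤ, (shiftFunctor D n).Additive] [Pretriangulated D]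

/-- The heart of a t-structure, as a predicate on objects. -/
def heartProp (t : TStructure D) (X : D) : Prop := t.le 0 X ∧ t.ge 0 X

/-- A t-structure is bounded if every object lies in some `Σ^i D^{≤0} ∩ Σ^j D^{≥0}`. -/
def IsBoundedTStructure (t : TStructure D) : Prop := ∀ X : D, ∃ a b : ℤ, t.ge a X ∧ t.le b X

/-- Data realizing an abelian category `A` as the heart of a t-structure `t` on `D`:
a fully faithful additive functor `A ⥤ D` whose essential image is the heart of `t`. -/
structure HeartData (t : TStructure D) where
  ι : A ⥤ D
  additive : ι.Additive
  full : ι.Full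
  faithful : ι.Faithful
  essImage_iff : ∀ X : D, ι.essImage X ↔ heartProp D t X

variable {A D}

/-- The property, for a family `θ` of maps from `n`-fold Yoneda extensions in the heart to
`Hom_D(X, Σ^n Y)`, of being the canonical family: it descends to the Yoneda extension
groups, `θ^1` sends a short exact sequence to the connecting morphism of an associated
distinguished triangle, and `θ^{n+1}` is computed on splices by `Σ^n(θ^1 ξ₁) ∘ θ^n ξ₂`. -/
structure IsCanThetaFamily {t : TStructure D} (h : HeartData A D t)
    (θ : ∀ (n : ℕ) (X Y : A), ExtSeq A n X Y → (h.ι.obj X ⟶ (h.ι.obj Y)⟦(n : ℤ)⟧)) : Prop where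
  compat : ∀ {n : ℕ} {X Y : A} (ξ ξ' : ExtSeq A n X Y), ExtEquiv A ξ ξ' →
    θ n X Y ξ = θ n X Y ξ'
  base : ∀ {X Y : A} (s : SES A X Y),
    Triangle.mk (h.ι.map s.i) (h.ι.map s.p)
      (θ 1 X Y (.base s) ≫ eqToHom (by norm_num)) ∈ distTriang D
  splice : ∀ {n : ℕ} {X Y Z : A} (s : SES A Z Y) (ξ : ExtSeq A n X Z),
    θ (n + 1) X Y (.splice s ξ) = θ n X Z ξ ≫ (θ 1 Z Y (.base s))⟦(n : ℤ)⟧' ≫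
      (shiftFunctorAdd' D ((1 : ℕ) : ℤ) ((n : ℕ) : ℤ) (((n + 1 : ℕ)) : ℤ)
        (by push_cast; ring)).inv.app (h.ι.obj Y)

/-- The map induced by `θ^n` on the Yoneda extension group `Yext^n(X, Y)`. -/
def thetaBar {t : TStructure D} {h : HeartData A D t}
    (θ : ∀ (n : ℕ) (X Y : A), ExtSeq A n X Y → (h.ι.obj X ⟶ (h.ι.obj Y)⟦(n : ℤ)⟧))
    (hθ : IsCanThetaFamily h θ) (n : ℕ) (X Y : A) :
    Yext A n X Y → (h.ι.obj X ⟶ (h.ι.obj Y)⟦(n : ℤ)⟧) :=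
  Quot.lift (θ n X Y) (fun ξ ξ' hr => hθ.compat ξ ξ' (Relation.EqvGen.rel _ _ hr))

variable (A D)

/-- The image of a short exact sequence under an exact functor. -/
def mapSES {A' : Type*} [Category A'] [Abelian A'] (G : A' ⥤ A) [G.Additive]
    (hG : ∀ S : ShortComplex A', S.ShortExact → (S.map G).ShortExact)
    {X Y : A'} (s : SES A' X Y) : SES A (G.obj X) (G.obj Y) where
  E := G.obj s.E
  i := G.map s.i
  p := G.map s.p
  w := by rw [← G.map_comp, s.w]; exact G.map_zero _ _
  ex := hG _ s.ex

/-- The image of a Yoneda extension under an exact functor. -/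
def mapExtSeq {A' : Type*} [Category A'] [Abelian A'] (G : A' ⥤ A) [G.Additive]
    (hG : ∀ S : ShortComplex A', S.ShortExact → (S.map G).ShortExact) :
    ∀ {n : ℕ} {X Y : A'}, ExtSeq A' n X Y → ExtSeq A n (G.obj X) (G.obj Y)
  | _, _, _, .base s => .base (mapSES A G hG s)
  | _, _, _, .splice s ξ => .splice (mapSES A G hG s) (mapExtSeq G hG ξ)

/-- Composition of a chain of morphisms `Σ^i X_i ⟶ Σ^{i+1} X_{i+1}` in `D`,
with all `X_i` in the heart. -/
def chainComp (ι : A ⥤ D) (obj : ℕ → A)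
    (g : ∀ i : ℕ, ((ι.obj (obj i))⟦((i : ℕ) : ℤ)⟧ ⟶ (ι.obj (obj (i + 1)))⟦(((i + 1 : ℕ)) : ℤ)⟧)) :
    ∀ n : ℕ, ((ι.obj (obj 0))⟦((0 : ℕ) : ℤ)⟧ ⟶ (ι.obj (obj n))⟦((n : ℕ) : ℤ)⟧)
  | 0 => 𝟙 _
  | n + 1 => chainComp ι obj g n ≫ g n

/-- A model of the bounded derived category `D^b(A)` of an abelian category `A`:
a triangulated category equipped with a bounded t-structure whose heart is `A`,
such that the canonical maps `Yext^n_A(X, Y) → Hom(X, Σ^n Y)` are bijective for all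
`n ≥ 1` (the characteristic-class isomorphisms of the bounded derived category). -/
structure DerivedData where
  t : TStructure D
  bounded : IsBoundedTStructure D t
  heart : HeartData A D t
  θ : ∀ (n : ℕ) (X Y : A), ExtSeq A n X Y → (heart.ι.obj X ⟶ (heart.ι.obj Y)⟦(n : ℤ)⟧)
  can : IsCanThetaFamily heart θ
  bij : ∀ (n : ℕ), 1 ≤ n → ∀ (X Y : A), Function.Bijective (thetaBar θ can n X Y)

variable {A D}

/-- Membership in the HRS-tilt `B = Σ(F) * T` of `A` with respect to a torsion pair
`(T, F)`, for an object of (a model of) `D^b(A)`. -/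
def HRSTiltMem {t : TStructure D} (h : HeartData A D t) (T F : A → Prop) (X : D) : Prop :=
  ∃ (f tt : A), F f ∧ T tt ∧ ∃ (g : (h.ι.obj f)⟦(1 : ℤ)⟧ ⟶ X) (g' : X ⟶ h.ι.obj tt)
    (δ : h.ι.obj tt ⟶ ((h.ι.obj f)⟦(1 : ℤ)⟧)⟦(1 : ℤ)⟧), Triangle.mk g g' δ ∈ distTriang D

lemma TorsionPair.exists_isZero {T F : A → Prop} (tp : TorsionPair A T F) :
    ∃ t f : A, T t ∧ F f ∧ IsZero t ∧ IsZero f := by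
  obtain ⟨t, f, i, p, _, ht, hf, ex⟩ := tp.exists_ses 0
  have := ex.mono_f
  have := ex.epi_g
  exact ⟨t, f, ht, hf, IsZero.of_mono i (isZero_zero A), IsZero.of_epi p (isZero_zero A)⟩

namespace HeartData

variable {t : TStructure D} (h : HeartData A D t)

lemma heartProp_obj (X : A) : heartProp D t (h.ι.obj X) :=
  (h.essImage_iff _).1 (h.ι.obj_mem_essImage X)

lemma eq_zero_of_hom_shift_neg ⦃X Y : A⦄ ⦃n : ℤ⦄ (f : h.ι.obj X ⟶ (h.ι.obj Y)⟦n⟧)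
    (hn : n < 0) : f = 0 :=
  t.zero_of_isLE_of_isGE f 0 (-n) (by lia) ⟨(h.heartProp_obj X).1⟩
    ⟨t.ge_shift 0 n (-n) (by lia) _ (h.heartProp_obj Y).2⟩

lemma eq_zero_of_hom_shift_pos {X Y : A} {n : ℤ} (f : (h.ι.obj X)⟦n⟧ ⟶ h.ι.obj Y)
    (hn : 0 < n) : f = 0 :=
  have := h.additive
  AbelianSubcategory.eq_zero_of_hom_shift_pos h.eq_zero_of_hom_shift_neg f hn

/-- Since there are no negative `Hom`s between objects of the heart, `X₁` is a kernel of
`X₂ ⟶ X₃` and `X₃` a cokernel of `X₁ ⟶ X₂` (BBD, *Faisceaux pervers*, 1.2). -/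
lemma shortExact_of_distTriang (T : Triangle D) (hT : T ∈ distTriang D) {X₁ X₂ X₃ : A}
    (e₁ : h.ι.obj X₁ ≅ T.obj₁) (e₂ : h.ι.obj X₂ ≅ T.obj₂) (e₃ : h.ι.obj X₃ ≅ T.obj₃) :
    ∃ (i : X₁ ⟶ X₂) (p : X₂ ⟶ X₃) (w : i ≫ p = 0), (ShortComplex.mk i p w).ShortExact := by
  have := h.full
  have := h.faithful
  have := h.additive
  let i := h.ι.preimage (e₁.hom ≫ T.mor₁ ≫ e₂.inv)
  let p := h.ι.preimage (e₂.hom ≫ T.mor₂ ≫ e₃.inv)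
  have hT' : Triangle.mk (h.ι.map i) (h.ι.map p) (e₃.hom ≫ T.mor₃ ≫ e₁.inv⟦(1 : ℤ)⟧') ∈
      distTriang D := by
    refine isomorphic_distinguished _ hT _ (Triangle.isoMk _ _ e₁ e₂ e₃ ?_ ?_ ?_)
    · change h.ι.map i ≫ e₂.hom = e₁.hom ≫ T.mor₁
      simp [i]
    · change h.ι.map p ≫ e₃.hom = e₂.hom ≫ T.mor₂
      simp [p]
    · change (e₃.hom ≫ T.mor₃ ≫ e₁.inv⟦(1 : ℤ)⟧') ≫ e₁.hom⟦(1 : ℤ)⟧' = e₃.hom ≫ T.mor₃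
      simp [← Functor.map_comp]
  have hker := AbelianSubcategory.isLimitKernelForkOfDistTriang h.eq_zero_of_hom_shift_neg
    i p _ hT'
  have hcoker := AbelianSubcategory.isColimitCokernelCoforkOfDistTriang
    h.eq_zero_of_hom_shift_neg i p _ hT'
  have w : i ≫ p = 0 := h.ι.map_injective (by
    rw [h.ι.map_comp, h.ι.map_zero]; exact comp_distTriang_mor_zero₁₂ _ hT')
  exact ⟨i, p, w, .mk' (ShortComplex.exact_of_f_is_kernel _ hker) (mono_of_isLimit_fork hker)
    (epi_of_isColimit_cofork hcoker)⟩

end HeartData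

section

variable {t : TStructure D} (h : HeartData A D t) {T F : A → Prop}

lemma hrsTiltMem_shift_of_torsionFree (tp : TorsionPair A T F) {X : A} (hX : F X) :
    HRSTiltMem h T F ((h.ι.obj X)⟦(1 : ℤ)⟧) := by
  have := h.additive
  obtain ⟨t₀, -, ht₀, -, hz, -⟩ := tp.exists_isZero
  refine ⟨X, t₀, hX, ht₀, 𝟙 _, 0, 0, isomorphic_distinguished _
    (contractible_distinguished ((h.ι.obj X)⟦(1 : ℤ)⟧)) _ ?_⟩
  exact Triangle.isoMk _ _ (Iso.refl _) (Iso.refl _) ((h.ι.map_isZero hz).iso (isZero_zero D))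
    (by rfl) ((isZero_zero D).eq_of_tgt _ _) ((h.ι.map_isZero hz).eq_of_src _ _)

lemma hrsTiltMem_of_torsion (tp : TorsionPair A T F) {X : A} (hX : T X) :
    HRSTiltMem h T F (h.ι.obj X) := by
  have := h.additive
  obtain ⟨-, f₀, -, hf₀, -, hz⟩ := tp.exists_isZero
  have hz' : IsZero ((h.ι.obj f₀)⟦(1 : ℤ)⟧) :=
    (shiftFunctor D (1 : ℤ)).map_isZero (h.ι.map_isZero hz)
  refine ⟨f₀, X, hf₀, hX, 0, 𝟙 _, 0, isomorphic_distinguished _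
    (contractible_distinguished₁ (h.ι.obj X)) _ ?_⟩
  exact Triangle.isoMk _ _ (hz'.iso (isZero_zero D)) (Iso.refl _) (Iso.refl _)
    (hz'.eq_of_src _ _) (by rfl) (zero_comp.trans comp_zero.symm)

end

/-- For a torsion pair `(T, F)` in `A`, the pair `(Σ F, T)` is a torsion
pair in the HRS-tilt `B = Σ(F) * T ⊆ D^b(A)`. -/
theorem statement_17 {A B : Type*} [Category A] [Abelian A] [Category B] [Abelian B]
    {D : Type*} [Category D] [HasZeroObject D] [Preadditive D] [HasShift D ℤ]
    [∀ n : ℤ, (shiftFunctor D n).Additive] [Pretriangulated D]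
    (dd : DerivedData A D) {T F : A → Prop} (tp : TorsionPair A T F)
    (tB : TStructure D) (hB : HeartData B D tB)
    (hBheart : ∀ X : D, hB.ι.essImage X ↔ HRSTiltMem dd.heart T F X) :
    TorsionPair B
      (fun b => ∃ f : A, F f ∧ Nonempty (hB.ι.obj b ≅ (dd.heart.ι.obj f)⟦(1 : ℤ)⟧))
      (fun b => ∃ t : A, T t ∧ Nonempty (hB.ι.obj b ≅ dd.heart.ι.obj t)) := by
  have := hB.faithful
  have := hB.additive
  refine ⟨?_, fun X => ?_⟩
  · rintro _ _ ⟨f, -, ⟨e₁⟩⟩ ⟨t, -, ⟨e₂⟩⟩ g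
    apply hB.ι.map_injective
    rw [Functor.map_zero, ← cancel_epi e₁.inv, ← cancel_mono e₂.hom, comp_zero, zero_comp]
    exact dd.heart.eq_zero_of_hom_shift_pos _ one_pos
  · obtain ⟨f, t, hf, ht, g, g', δ, hT⟩ := (hBheart _).1 (hB.ι.obj_mem_essImage X)
    obtain ⟨Xf, ⟨ef⟩⟩ := (hBheart _).2 (hrsTiltMem_shift_of_torsionFree dd.heart tp hf)
    obtain ⟨Xt, ⟨et⟩⟩ := (hBheart _).2 (hrsTiltMem_of_torsion dd.heart tp ht)
    obtain ⟨i, p, w, hex⟩ := hB.shortExact_of_distTriang _ hT ef (Iso.refl _) et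
    exact ⟨Xf, Xt, i, p, w, ⟨f, hf, ⟨ef⟩⟩, ⟨t, ht, ⟨et⟩⟩, hex⟩

end HRS
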